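/- The generalized Petersen graph P(7,2) has domination number 5 and order 14, hence γ(P(7,2)) = ⌊5·14/14⌋ = 5. -/

import Mathlib

/-- Closed neighborhood of a set of vertices. -/
def closedN {V : Type*} (G : SimpleGraph V) (S : Set V) : Set V :=
  {v | v ∈ S ∨ ∃ u ∈ S, G.Adj u v}

/-- Domination number: minimum cardinality of a dominating set. -/
noncomputable def domNum {V : Type*} [Fintype V] (G : SimpleGraph V) : ℕ :=
  sInf {k | ∃ S : Set V, S.ncard = k ∧ closedN G S = Set.univ}

/-- The generalized Petersen graph `P(7,2)`: outer vertices `inl i`, inner vertices `inr i`,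
with edges `uᵢuᵢ₊₁`, `uᵢwᵢ`, `wᵢwᵢ₊₂` (indices mod 7). -/
def P72 : SimpleGraph (Fin 7 ⊕ Fin 7) :=
  SimpleGraph.fromRel fun a b =>
    match a, b with
    | Sum.inl i, Sum.inl j => j = i + 1
    | Sum.inl i, Sum.inr j => j = i
    | Sum.inr i, Sum.inr j => j = i + 2
    | _, _ => False

/-! An outer vertex of `P(7,2)` dominates three outer vertices and one inner vertex, an inner
vertex three inner vertices and one outer vertex. Hence a dominating set with `a` outer and `b`
inner vertices has `3a + b ≥ 7` and `a + 3b ≥ 7`; together with `a + b ≤ 4` this forces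
`a = b = 2`, and a finite check shows that no such set dominates. On the other hand
`{u₀, u₁, u₂, w₄, w₅}` dominates. -/

open Finset

section Domination

variable {V : Type*} (G : SimpleGraph V)

theorem closedN_eq_univ_iff (S : Set V) :
    closedN G S = Set.univ ↔ ∀ v, v ∈ S ∨ ∃ u ∈ S, G.Adj u v :=
  Set.eq_univ_iff_forall

theorem card_le_sum_card_filter_closedNbhd [DecidableEq V] [DecidableRel G.Adj] {S : Finset V}
    (hS : closedN G S = Set.univ) (X : Finset V) :
    #X ≤ ∑ s ∈ S, #{v ∈ X | v = s ∨ G.Adj s v} := by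
  rw [closedN_eq_univ_iff] at hS
  calc #X ≤ #(S.biUnion fun s => {v ∈ X | v = s ∨ G.Adj s v}) := by
        refine card_le_card fun v hv => ?_
        simp only [mem_biUnion, mem_filter]
        rcases hS v with hv' | ⟨u, hu, huv⟩
        · exact ⟨v, hv', hv, .inl rfl⟩
        · exact ⟨u, hu, hv, .inr huv⟩
    _ ≤ _ := card_biUnion_le

end Domination

theorem Finset.sum_sumElim_const {α β : Type*} (s : Finset (α ⊕ β)) (m n : ℕ) :
    ∑ x ∈ s, Sum.elim (fun _ => m) (fun _ => n) x = m * #s.toLeft + n * #s.toRight := by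
  simp [sum_sum_eq_sum_toLeft_add_sum_toRight, mul_comm]

instance : DecidableRel P72.Adj := fun a b => by
  unfold P72
  rw [SimpleGraph.fromRel_adj]
  cases a <;> cases b <;> exact inferInstance

namespace P72

theorem card_outer_filter_closedNbhd : ∀ s : Fin 7 ⊕ Fin 7,
    #{v | v.isLeft ∧ (v = s ∨ P72.Adj s v)} = Sum.elim (fun _ => 3) (fun _ => 1) s := by
  decide

theorem card_inner_filter_closedNbhd : ∀ s : Fin 7 ⊕ Fin 7,
    #{v | v.isRight ∧ (v = s ∨ P72.Adj s v)} = Sum.elim (fun _ => 1) (fun _ => 3) s := by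
  decide

theorem seven_le_of_dominating {s : Finset (Fin 7 ⊕ Fin 7)} (hs : closedN P72 s = Set.univ) :
    7 ≤ 3 * #s.toLeft + #s.toRight ∧ 7 ≤ #s.toLeft + 3 * #s.toRight := by
  have houter := card_le_sum_card_filter_closedNbhd P72 hs {v | v.isLeft}
  have hinner := card_le_sum_card_filter_closedNbhd P72 hs {v | v.isRight}
  simp only [filter_filter, card_outer_filter_closedNbhd, card_inner_filter_closedNbhd,
    sum_sumElim_const, one_mul] at houter hinner
  exact ⟨houter, hinner⟩

theorem card_toLeft_toRight_eq_two_of_dominating {s : Finset (Fin 7 ⊕ Fin 7)}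
    (hs : closedN P72 s = Set.univ) (hcard : #s ≤ 4) : #s.toLeft = 2 ∧ #s.toRight = 2 := by
  have := seven_le_of_dominating hs
  have := card_toLeft_add_card_toRight (u := s)
  omega

theorem exists_undominated_two_outer_two_inner : ∀ a a' b b' : Fin 7,
    ∃ v, v ∉ ({a, a'} : Finset _).disjSum {b, b'} ∧
      ∀ u ∈ ({a, a'} : Finset _).disjSum {b, b'}, ¬ P72.Adj u v := by
  decide +kernel

theorem five_le_card_of_dominating {s : Finset (Fin 7 ⊕ Fin 7)}
    (hs : closedN P72 s = Set.univ) : 5 ≤ #s := by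
  by_contra! hlt
  obtain ⟨hleft, hright⟩ := card_toLeft_toRight_eq_two_of_dominating hs (by omega)
  obtain ⟨a, a', -, ha⟩ := card_eq_two.mp hleft
  obtain ⟨b, b', -, hb⟩ := card_eq_two.mp hright
  obtain ⟨v, hv, hadj⟩ := exists_undominated_two_outer_two_inner a a' b b'
  rw [← ha, ← hb, toLeft_disjSum_toRight] at hv hadj
  rcases (closedN_eq_univ_iff P72 s).mp hs v with hvs | ⟨u, hu, huv⟩
  exacts [hv hvs, hadj u hu huv]

def fiveDominatingSet : Finset (Fin 7 ⊕ Fin 7) :=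
  {.inl 0, .inl 1, .inl 2, .inr 4, .inr 5}

theorem closedN_fiveDominatingSet : closedN P72 fiveDominatingSet = Set.univ := by
  rw [closedN_eq_univ_iff]
  simp only [mem_coe]
  decide

theorem isLeast_ncard_dominating :
    IsLeast {k | ∃ S : Set (Fin 7 ⊕ Fin 7), S.ncard = k ∧ closedN P72 S = Set.univ} 5 := by
  refine ⟨⟨_, by rw [Set.ncard_coe_finset]; rfl, closedN_fiveDominatingSet⟩, ?_⟩
  rintro _ ⟨S, rfl, hS⟩
  obtain ⟨s, rfl⟩ := S.toFinite.exists_finset_coe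
  rw [Set.ncard_coe_finset]
  exact five_le_card_of_dominating hS

end P72

/-- `P(7,2)` has order 14 and domination number `5 = ⌊5·14/14⌋`. -/
theorem petersen72_domination :
    Fintype.card (Fin 7 ⊕ Fin 7) = 14 ∧ domNum P72 = 5 ∧ domNum P72 = 5 * 14 / 14 := by
  have h : domNum P72 = 5 := P72.isLeast_ncard_dominating.csInf_eq
  exact ⟨rfl, h, h⟩
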